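/- Let X be a normed space, C ⊆ X nonempty convex, T : C → C nonexpansive, and (λ_n)_{n≥1} ⊆ [0,1] with rate of convergence α of λ_n → 0, Cauchy modulus β of s_n := ∑_{i=1}^n |λ_{i+1}-λ_i|, and rate of divergence θ of ∑ λ_n. Let x ∈ C with Halpern iteration (x_n) bounded, and M ∈ ℕ* with M ≥ ‖x_n‖ + ‖x‖ + ‖Tx‖ for all n ≥ 1. Then for all ε ∈ (0,2) and all n ≥ Φ := max{ θ(β(ε/(8M)) + 1 + ⌈ln(8M/ε)⌉), α(ε/(4M)) }, we have ‖x_n - T x_n‖ < ε. -/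

import Mathlib

/-!
Writing `aₙ = ‖xₙ₊₁ - xₙ‖`, nonexpansiveness gives the recursive inequality
`aₙ₊₁ ≤ (1 - λₙ₊₂) aₙ + 2M |λₙ₊₂ - λₙ₊₁|`. Unfolding it from `k = β(ε/8M)` on, the product
`∏ (1 - λᵢ) ≤ exp (-∑ λᵢ)` is at most `ε/8M` once `n ≥ θ(k + 1 + ⌈ln (8M/ε)⌉)`, and the tail of the
`|λᵢ₊₁ - λᵢ|` series is below `ε/8M`, so `aₙ < ε/2`. Finally
`‖xₙ - Txₙ‖ ≤ aₙ + λₙ₊₁ ‖x - Txₙ‖ < ε/2 + (ε/4M) 2M` once `n + 1 ≥ α(ε/4M)`.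
-/

open Finset Real

theorem le_prod_Ioc_mul_add_sum_Ioc {a b c : ℕ → ℝ} {k n : ℕ} (hb0 : ∀ i, 0 ≤ b i)
    (hb1 : ∀ i, b i ≤ 1) (hc : ∀ i, 0 ≤ c i) (h : ∀ i, a (i + 1) ≤ b (i + 1) * a i + c (i + 1))
    (hkn : k ≤ n) :
    a n ≤ (∏ i ∈ Ioc k n, b i) * a k + ∑ i ∈ Ioc k n, c i := by
  induction n, hkn using Nat.le_induction with
  | base => simp
  | succ n hkn ih =>
    rw [prod_Ioc_succ_top hkn, sum_Ioc_succ_top hkn]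
    have hS : b (n + 1) * ∑ i ∈ Ioc k n, c i ≤ ∑ i ∈ Ioc k n, c i :=
      mul_le_of_le_one_left (sum_nonneg fun i _ => hc i) (hb1 _)
    calc a (n + 1) ≤ b (n + 1) * a n + c (n + 1) := h n
      _ ≤ b (n + 1) * ((∏ i ∈ Ioc k n, b i) * a k + ∑ i ∈ Ioc k n, c i) + c (n + 1) := by
        gcongr
        exact hb0 _
      _ ≤ _ := by linarith

theorem prod_one_sub_le_exp_neg_sum {ι : Type*} (s : Finset ι) {f : ι → ℝ}
    (hf : ∀ i ∈ s, f i ≤ 1) : ∏ i ∈ s, (1 - f i) ≤ exp (-∑ i ∈ s, f i) := by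
  rw [← sum_neg_distrib, exp_sum]
  exact prod_le_prod (fun i hi => sub_nonneg.2 (hf i hi)) fun i _ => one_sub_le_exp_neg _

theorem sum_Ioc_eq_sum_Icc_sub_sum_Icc (f : ℕ → ℝ) {k n : ℕ} (hkn : k ≤ n) :
    ∑ i ∈ Ioc k n, f i = ∑ i ∈ Icc 1 n, f i - ∑ i ∈ Icc 1 k, f i := by
  have hIcc : ∀ m, Icc 1 m = Ioc 0 m := Icc_add_one_left_eq_Ioc 0
  rw [hIcc, hIcc, ← sum_Ioc_consecutive f (Nat.zero_le k) hkn]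
  ring

theorem sum_Icc_le_card {f : ℕ → ℝ} (hf : ∀ i ≥ 1, f i ≤ 1) (N : ℕ) :
    ∑ i ∈ Icc 1 N, f i ≤ N := by
  calc ∑ i ∈ Icc 1 N, f i ≤ ∑ _i ∈ Icc 1 N, (1 : ℝ) :=
        sum_le_sum fun i hi => hf i (mem_Icc.1 hi).1
    _ = N := by simp

theorem le_of_le_sum_Icc {f : ℕ → ℝ} (hf : ∀ i ≥ 1, f i ≤ 1) {m N : ℕ}
    (h : (m : ℝ) ≤ ∑ i ∈ Icc 1 N, f i) : m ≤ N :=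
  mod_cast h.trans (sum_Icc_le_card hf N)

theorem le_sum_Ioc_of_le_sum_Icc {f : ℕ → ℝ} (hf : ∀ i ≥ 1, f i ∈ Set.Icc (0 : ℝ) 1)
    {m L N n : ℕ} (h : ((m + L : ℕ) : ℝ) ≤ ∑ i ∈ Icc 1 N, f i) (hNn : N ≤ n) :
    (L : ℝ) ≤ ∑ i ∈ Ioc m n, f i := by
  have hf1 : ∀ i ≥ 1, f i ≤ 1 := fun i hi => (hf i hi).2
  have hmn : m ≤ n := by have := le_of_le_sum_Icc hf1 h; omega
  have hmono : ∑ i ∈ Icc 1 N, f i ≤ ∑ i ∈ Icc 1 n, f i :=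
    sum_le_sum_of_subset_of_nonneg (Icc_subset_Icc_right hNn) fun i hi _ =>
      (hf i (mem_Icc.1 hi).1).1
  rw [sum_Ioc_eq_sum_Icc_sub_sum_Icc f hmn]
  push_cast at h
  linarith [sum_Icc_le_card hf1 m]

theorem sum_Ioc_lt_of_sum_Icc_sub_lt {f : ℕ → ℝ} {b n : ℕ} {δ : ℝ} (hδ : 0 < δ)
    (h : ∀ j : ℕ, 1 ≤ j → ∑ i ∈ Icc 1 (b + j), f i - ∑ i ∈ Icc 1 b, f i < δ) (hbn : b ≤ n) :
    ∑ i ∈ Ioc b n, f i < δ := by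
  obtain ⟨j, rfl⟩ := Nat.exists_eq_add_of_le hbn
  rcases Nat.eq_zero_or_pos j with rfl | hj
  · simpa using hδ
  · rw [sum_Ioc_eq_sum_Icc_sub_sum_Icc f hbn]
    exact h j hj

theorem exp_neg_le_inv_of_log_le {A s : ℝ} (hA : 0 < A) (h : Real.log A ≤ s) :
    exp (-s) ≤ A⁻¹ := by
  calc exp (-s) ≤ exp (-Real.log A) := exp_le_exp.2 (neg_le_neg h)
    _ = A⁻¹ := by rw [exp_neg, exp_log hA]

section Halpern

variable {X : Type*} [NormedAddCommGroup X] {C : Set X} {T : X → X}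
  {lam : ℕ → ℝ} {x₀ : X} {x : ℕ → X}

theorem halpern_norm_le {M : ℝ} (hx0 : x 0 = x₀)
    (hM : ∀ n ≥ 1, ‖x n‖ + ‖x₀‖ + ‖T x₀‖ ≤ M) (n : ℕ) : ‖x n‖ ≤ M := by
  cases n with
  | zero => rw [hx0]; linarith [hM 1 le_rfl, norm_nonneg (x 1), norm_nonneg (T x₀)]
  | succ n => linarith [hM (n + 1) (Nat.succ_pos n), norm_nonneg x₀, norm_nonneg (T x₀)]

theorem halpern_norm_apply_le (hT : ∀ u ∈ C, ∀ v ∈ C, ‖T u - T v‖ ≤ ‖u - v‖)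
    (hxC : ∀ n, x n ∈ C) {M : ℝ} (hx0 : x 0 = x₀)
    (hM : ∀ n ≥ 1, ‖x n‖ + ‖x₀‖ + ‖T x₀‖ ≤ M) (n : ℕ) : ‖T (x n)‖ ≤ M := by
  cases n with
  | zero => rw [hx0]; linarith [hM 1 le_rfl, norm_nonneg (x 1), norm_nonneg x₀]
  | succ n =>
    calc ‖T (x (n + 1))‖ ≤ ‖T (x (n + 1)) - T x₀‖ + ‖T x₀‖ := norm_le_norm_sub_add _ _
      _ ≤ ‖x (n + 1)‖ + ‖x₀‖ + ‖T x₀‖ := by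
        gcongr
        exact (hT _ (hxC _) _ (hx0 ▸ hxC 0)).trans (norm_sub_le _ _)
      _ ≤ M := hM (n + 1) (Nat.succ_pos n)

theorem halpern_norm_sub_apply_le_two_mul (hT : ∀ u ∈ C, ∀ v ∈ C, ‖T u - T v‖ ≤ ‖u - v‖)
    (hxC : ∀ n, x n ∈ C) {M : ℝ} (hx0 : x 0 = x₀)
    (hM : ∀ n ≥ 1, ‖x n‖ + ‖x₀‖ + ‖T x₀‖ ≤ M) (n : ℕ) : ‖x₀ - T (x n)‖ ≤ 2 * M := by
  linarith [norm_sub_le x₀ (T (x n)), hx0 ▸ halpern_norm_le hx0 hM 0,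
    halpern_norm_apply_le hT hxC hx0 hM n]

theorem halpern_norm_succ_sub_le_two_mul {M : ℝ} (hx0 : x 0 = x₀)
    (hM : ∀ n ≥ 1, ‖x n‖ + ‖x₀‖ + ‖T x₀‖ ≤ M) (n : ℕ) : ‖x (n + 1) - x n‖ ≤ 2 * M := by
  linarith [norm_sub_le (x (n + 1)) (x n), halpern_norm_le hx0 hM (n + 1), halpern_norm_le hx0 hM n]

variable [NormedSpace ℝ X]

theorem halpern_mem (hconv : Convex ℝ C) (hTmaps : Set.MapsTo T C C)
    (hlam : ∀ n ≥ 1, lam n ∈ Set.Icc (0 : ℝ) 1) (hx₀ : x₀ ∈ C) (hx0 : x 0 = x₀)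
    (hrec : ∀ n : ℕ, x (n + 1) = lam (n + 1) • x₀ + (1 - lam (n + 1)) • T (x n)) (n : ℕ) :
    x n ∈ C := by
  induction n with
  | zero => exact hx0 ▸ hx₀
  | succ n ih =>
    obtain ⟨h0, h1⟩ := hlam (n + 1) (Nat.succ_pos n)
    rw [hrec n]
    exact hconv hx₀ (hTmaps ih) h0 (sub_nonneg.2 h1) (add_sub_cancel _ _)

theorem halpern_succ_sub_apply
    (hrec : ∀ n : ℕ, x (n + 1) = lam (n + 1) • x₀ + (1 - lam (n + 1)) • T (x n)) (n : ℕ) :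
    x (n + 1) - T (x n) = lam (n + 1) • (x₀ - T (x n)) := by
  rw [hrec n]
  module

theorem halpern_succ_succ_sub
    (hrec : ∀ n : ℕ, x (n + 1) = lam (n + 1) • x₀ + (1 - lam (n + 1)) • T (x n)) (n : ℕ) :
    x (n + 2) - x (n + 1) =
      (lam (n + 2) - lam (n + 1)) • (x₀ - T (x n))
        + (1 - lam (n + 2)) • (T (x (n + 1)) - T (x n)) := by
  rw [hrec (n + 1), hrec n]
  module

theorem halpern_norm_sub_apply_le
    (hrec : ∀ n : ℕ, x (n + 1) = lam (n + 1) • x₀ + (1 - lam (n + 1)) • T (x n)) (n : ℕ) :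
    ‖x n - T (x n)‖ ≤ ‖x (n + 1) - x n‖ + |lam (n + 1)| * ‖x₀ - T (x n)‖ := by
  calc ‖x n - T (x n)‖ ≤ ‖x n - x (n + 1)‖ + ‖x (n + 1) - T (x n)‖ :=
        norm_sub_le_norm_sub_add_norm_sub _ _ _
    _ = _ := by rw [norm_sub_rev, halpern_succ_sub_apply hrec, norm_smul, Real.norm_eq_abs]

theorem halpern_norm_succ_succ_sub_le (hT : ∀ u ∈ C, ∀ v ∈ C, ‖T u - T v‖ ≤ ‖u - v‖)
    (hxC : ∀ n, x n ∈ C) (hlam : ∀ n ≥ 1, lam n ∈ Set.Icc (0 : ℝ) 1)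
    (hrec : ∀ n : ℕ, x (n + 1) = lam (n + 1) • x₀ + (1 - lam (n + 1)) • T (x n))
    {K : ℝ} (hK : ∀ n, ‖x₀ - T (x n)‖ ≤ K) (n : ℕ) :
    ‖x (n + 2) - x (n + 1)‖ ≤
      (1 - lam (n + 2)) * ‖x (n + 1) - x n‖ + |lam (n + 2) - lam (n + 1)| * K := by
  have hlam1 : 0 ≤ 1 - lam (n + 2) := sub_nonneg.2 (hlam (n + 2) (by omega)).2
  rw [halpern_succ_succ_sub hrec]
  calc _ ≤ ‖(lam (n + 2) - lam (n + 1)) • (x₀ - T (x n))‖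
        + ‖(1 - lam (n + 2)) • (T (x (n + 1)) - T (x n))‖ := norm_add_le _ _
    _ = |lam (n + 2) - lam (n + 1)| * ‖x₀ - T (x n)‖
        + (1 - lam (n + 2)) * ‖T (x (n + 1)) - T (x n)‖ := by
      rw [norm_smul, norm_smul, Real.norm_eq_abs, Real.norm_of_nonneg hlam1]
    _ ≤ |lam (n + 2) - lam (n + 1)| * K + (1 - lam (n + 2)) * ‖x (n + 1) - x n‖ := by
      gcongr
      exacts [hK n, hT _ (hxC _) _ (hxC _)]
    _ = _ := add_comm _ _

theorem halpern_norm_succ_sub_le (hT : ∀ u ∈ C, ∀ v ∈ C, ‖T u - T v‖ ≤ ‖u - v‖)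
    (hxC : ∀ n, x n ∈ C) (hlam : ∀ n ≥ 1, lam n ∈ Set.Icc (0 : ℝ) 1)
    (hrec : ∀ n : ℕ, x (n + 1) = lam (n + 1) • x₀ + (1 - lam (n + 1)) • T (x n))
    {K : ℝ} (hK : ∀ n, ‖x₀ - T (x n)‖ ≤ K) {k n : ℕ} (hkn : k ≤ n) :
    ‖x (n + 1) - x n‖ ≤ exp (-∑ i ∈ Ioc (k + 1) (n + 1), lam i) * ‖x (k + 1) - x k‖
      + (∑ i ∈ Ioc k n, |lam (i + 1) - lam i|) * K := by
  have hK0 : 0 ≤ K := (norm_nonneg _).trans (hK 0)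
  have hlam' : ∀ i, lam (i + 1) ∈ Set.Icc (0 : ℝ) 1 := fun i => hlam (i + 1) (Nat.succ_pos i)
  have hunfold := le_prod_Ioc_mul_add_sum_Ioc (a := fun m => ‖x (m + 1) - x m‖)
    (b := fun i => 1 - lam (i + 1)) (c := fun i => |lam (i + 1) - lam i| * K)
    (fun i => sub_nonneg.2 (hlam' i).2) (fun i => by linarith [(hlam' i).1])
    (fun i => mul_nonneg (abs_nonneg _) hK0)
    (fun i => halpern_norm_succ_succ_sub_le hT hxC hlam hrec hK i) hkn
  have hprod : ∏ i ∈ Ioc k n, (1 - lam (i + 1)) ≤ exp (-∑ i ∈ Ioc (k + 1) (n + 1), lam i) := by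
    rw [← map_add_right_Ioc, sum_map]
    exact prod_one_sub_le_exp_neg_sum _ fun i _ => (hlam' i).2
  simp only [← sum_mul] at hunfold
  exact hunfold.trans (by gcongr)

end Halpern

theorem halpern_rate_of_asymptotic_regularity_general
    {X : Type*} [NormedAddCommGroup X] [NormedSpace ℝ X]
    (C : Set X) (hconv : Convex ℝ C)
    (T : X → X) (hTmaps : Set.MapsTo T C C)
    (hT : ∀ u ∈ C, ∀ v ∈ C, ‖T u - T v‖ ≤ ‖u - v‖)
    (lam : ℕ → ℝ) (hlam : ∀ n ≥ 1, lam n ∈ Set.Icc (0:ℝ) 1)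
    (x₀ : X) (hx₀ : x₀ ∈ C) (x : ℕ → X) (hx0 : x 0 = x₀)
    (hrec : ∀ n : ℕ, x (n + 1) = lam (n + 1) • x₀ + (1 - lam (n + 1)) • T (x n))
    (α : ℝ → ℕ)
    (hα : ∀ ε > (0:ℝ), ∀ n : ℕ, α ε ≤ n → |lam n| < ε)
    (β : ℝ → ℕ)
    (hβ : ∀ ε > (0:ℝ), ∀ n : ℕ, 1 ≤ n →
      (∑ i ∈ Finset.Icc 1 (β ε + n), |lam (i + 1) - lam i|)
        - (∑ i ∈ Finset.Icc 1 (β ε), |lam (i + 1) - lam i|) < ε)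
    (θ : ℕ → ℕ)
    (hθ : ∀ n : ℕ, 1 ≤ n → (n : ℝ) ≤ ∑ i ∈ Finset.Icc 1 (θ n), lam i)
    (M : ℕ) (hMpos : 1 ≤ M)
    (hM : ∀ n ≥ 1, ‖x n‖ + ‖x₀‖ + ‖T x₀‖ ≤ (M : ℝ)) :
    ∀ ε : ℝ, 0 < ε → ε < 2 →
      ∀ n : ℕ,
        max (θ (β (ε / (8 * M)) + 1 + ⌈Real.log (8 * M / ε)⌉₊)) (α (ε / (4 * M))) ≤ n →
        ‖x n - T (x n)‖ < ε := by
  intro ε hε _ n hn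
  have hM0 : (0 : ℝ) < M := by exact_mod_cast hMpos
  have hε8 : 0 < ε / (8 * M) := by positivity
  have hxC := halpern_mem hconv hTmaps hlam hx₀ hx0 hrec
  have hK := halpern_norm_sub_apply_le_two_mul hT hxC hx0 hM
  set k := β (ε / (8 * M))
  have hθn : θ (k + 1 + ⌈Real.log (8 * M / ε)⌉₊) ≤ n := le_of_max_le_left hn
  have hdiv := hθ (k + 1 + ⌈Real.log (8 * M / ε)⌉₊) (by omega)
  have hkn : k ≤ n := by have := le_of_le_sum_Icc (fun i hi => (hlam i hi).2) hdiv; omega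
  have hexp : exp (-∑ i ∈ Ioc (k + 1) (n + 1), lam i) ≤ ε / (8 * M) := by
    rw [← inv_div]
    exact exp_neg_le_inv_of_log_le (by positivity)
      ((Nat.le_ceil _).trans (le_sum_Ioc_of_le_sum_Icc hlam hdiv (by omega)))
  have hcauchy := sum_Ioc_lt_of_sum_Icc_sub_lt hε8 (hβ _ hε8) hkn
  have hstep : ‖x (n + 1) - x n‖ < ε / 2 :=
    calc ‖x (n + 1) - x n‖ ≤ exp (-∑ i ∈ Ioc (k + 1) (n + 1), lam i) * ‖x (k + 1) - x k‖
          + (∑ i ∈ Ioc k n, |lam (i + 1) - lam i|) * (2 * M) :=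
          halpern_norm_succ_sub_le hT hxC hlam hrec hK hkn
      _ < ε / (8 * M) * (2 * M) + ε / (8 * M) * (2 * M) :=
          add_lt_add_of_le_of_lt
            (mul_le_mul hexp (halpern_norm_succ_sub_le_two_mul hx0 hM k) (norm_nonneg _) hε8.le)
            (mul_lt_mul_of_pos_right hcauchy (by positivity))
      _ = ε / 2 := by field_simp; ring
  have hlamn : |lam (n + 1)| < ε / (4 * M) := hα _ (by positivity) _ (by omega)
  calc ‖x n - T (x n)‖ ≤ ‖x (n + 1) - x n‖ + |lam (n + 1)| * ‖x₀ - T (x n)‖ :=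
        halpern_norm_sub_apply_le hrec n
    _ < ε / 2 + ε / (4 * M) * (2 * M) :=
        add_lt_add hstep ((mul_le_mul_of_nonneg_left (hK n) (abs_nonneg _)).trans_lt
          (mul_lt_mul_of_pos_right hlamn (by positivity)))
    _ = ε := by field_simp; ring

theorem halpern_rate_of_asymptotic_regularity
    {X : Type*} [NormedAddCommGroup X] [NormedSpace ℝ X]
    (C : Set X) (hC : C.Nonempty) (hconv : Convex ℝ C)
    (T : X → X) (hTmaps : Set.MapsTo T C C)
    (hT : ∀ u ∈ C, ∀ v ∈ C, ‖T u - T v‖ ≤ ‖u - v‖)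
    (lam : ℕ → ℝ) (hlam : ∀ n ≥ 1, lam n ∈ Set.Icc (0:ℝ) 1)
    (x₀ : X) (hx₀ : x₀ ∈ C) (x : ℕ → X) (hx0 : x 0 = x₀)
    (hrec : ∀ n : ℕ, x (n + 1) = lam (n + 1) • x₀ + (1 - lam (n + 1)) • T (x n))
    (α : ℝ → ℕ) (hαpos : ∀ ε > (0:ℝ), 1 ≤ α ε)
    (hα : ∀ ε > (0:ℝ), ∀ n : ℕ, α ε ≤ n → |lam n| < ε)
    (β : ℝ → ℕ) (hβpos : ∀ ε > (0:ℝ), 1 ≤ β ε)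
    (hβ : ∀ ε > (0:ℝ), ∀ n : ℕ, 1 ≤ n →
      (∑ i ∈ Finset.Icc 1 (β ε + n), |lam (i + 1) - lam i|)
        - (∑ i ∈ Finset.Icc 1 (β ε), |lam (i + 1) - lam i|) < ε)
    (θ : ℕ → ℕ) (hθpos : ∀ n : ℕ, 1 ≤ n → 1 ≤ θ n)
    (hθ : ∀ n : ℕ, 1 ≤ n → (n : ℝ) ≤ ∑ i ∈ Finset.Icc 1 (θ n), lam i)
    (M : ℕ) (hMpos : 1 ≤ M)
    (hM : ∀ n ≥ 1, ‖x n‖ + ‖x₀‖ + ‖T x₀‖ ≤ (M : ℝ)) :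
    ∀ ε : ℝ, 0 < ε → ε < 2 →
      ∀ n : ℕ,
        max (θ (β (ε / (8 * M)) + 1 + ⌈Real.log (8 * M / ε)⌉₊)) (α (ε / (4 * M))) ≤ n →
        ‖x n - T (x n)‖ < ε :=
  halpern_rate_of_asymptotic_regularity_general C hconv T hTmaps hT lam hlam x₀ hx₀ x hx0 hrec α hα
    β hβ θ hθ M hMpos hM
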